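/- Let G = ⟨ζ⟩ ⋉ T¹ ⋉ Sh₁ be the automorphism group of B₁ (notation as above). Then the commutator subgroup [G,G] equals {t_{λ²} : λ ∈ K^*} ⋉ Sh₁, and G/[G,G] ≅ ℤ/2 × K^*/(K^*)². -/

import Mathlib

/-!
Every unit of `B₁` is a scalar multiple of a power of `x`: the lexicographically extreme
coefficients of `u` and `u⁻¹` in the basis `h^m x^k` multiply to extreme coefficients of
`u u⁻¹ = 1`, which forces `u` to be a single monomial. Hence an automorphism `σ` sends
`x ↦ λ x^e` with `e = ±1`, and `σ ↦ (e, λ (K^*)²)` is a homomorphism to the abelian group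
`ℤˣ × K^*/(K^*)²`, onto because of `t_λ` and `ζ`. If `e = 1`, then `σ h - h` commutes with `x`,
and the centralizer of `x` is `K[x, x⁻¹]` (a polynomial `q` with `q(X - 1) = q` is constant in
characteristic zero), so the kernel consists of the automorphisms `x ↦ λ² x`, `h ↦ h + p(x)`,
i.e. of `s_p t_{λ²}`. These are products of commutators: `⁅t_λ, ζ⁆ = t_{λ²}`,
`⁅ζ, s_a⁆ = s_{-2a}` and `⁅t_μ, s_{a x^j}⁆ = s_{(μ^j - 1) a x^j}`, with `μ = 2` for `j ≠ 0`.
-/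

open Polynomial
open scoped commutatorElement

theorem Polynomial.coeff_X_pow_mul_X_add_C_pow_of_le {R : Type*} [CommRing R] [Nontrivial R]
    (m n i : ℕ) (c : R) (hi : m + n ≤ i) :
    (X ^ m * (X + C c) ^ n).coeff i = if i = m + n then 1 else 0 := by
  have hmonic := (monic_X_pow m).mul ((monic_X_add_C c).pow n)
  have hdeg : (X ^ m * (X + C c) ^ n).natDegree = m + n := by
    rw [(monic_X_pow m).natDegree_mul ((monic_X_add_C c).pow n), natDegree_X_pow,
      (monic_X_add_C c).natDegree_pow, natDegree_X_add_C, mul_one]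
  split_ifs with h
  · rw [h, ← hdeg]
    exact hmonic.coeff_natDegree
  · exact coeff_eq_zero_of_natDegree_lt (by omega)

theorem commutatorElement_mem_commutator {G : Type*} [Group G] (a b : G) :
    ⁅a, b⁆ ∈ commutator G :=
  Subgroup.commutator_mem_commutator (Subgroup.mem_top a) (Subgroup.mem_top b)

theorem commutatorElement_eq_of_mul_eq {G : Type*} [Group G] {a b c : G} (h : a * b = c * b * a) :
    ⁅a, b⁆ = c := by
  rw [commutatorElement_def, h]
  group

theorem QuotientGroup.mk_zpow_intUnits_eq_of_squares {G : Type*} [CommGroup G] (g : G) (e : ℤˣ) :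
    ((g ^ (e : ℤ) : G) : G ⧸ (powMonoidHom 2 : G →* G).range) = g := by
  rcases Int.units_eq_one_or e with rfl | rfl
  · simp
  · rw [Units.val_neg, Units.val_one, zpow_neg_one, QuotientGroup.eq, inv_inv]
    exact ⟨g, by simp [sq]⟩

theorem two_zpow_ne_one {K : Type*} [Field K] [CharZero K] {j : ℤ} (hj : j ≠ 0) :
    (2 : K) ^ j ≠ 1 := by
  have h : (2 : ℚ) ^ j ≠ 1 := by
    rwa [Ne, zpow_eq_one_iff_right₀ zero_le_two (by norm_num)]
  intro h2
  exact h (Rat.cast_injective (α := K) (by push_cast; exact h2))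

theorem Polynomial.eq_C_of_taylor_eq_self {R : Type*} [CommRing R] [IsDomain R] [CharZero R]
    {r : R} (hr : r ≠ 0) {q : R[X]} (hq : taylor r q = q) : q = C (q.coeff 0) := by
  have hperiodic (n : ℕ) : q.eval (n * r) = q.eval 0 := by
    induction n with
    | zero => simp
    | succ n ih => rw [Nat.cast_succ, add_one_mul, ← taylor_eval, hq, ih]
  refine eq_of_infinite_eval_eq _ _ ((Set.infinite_range_of_injective fun m n hmn =>
    Nat.cast_injective (mul_right_cancel₀ hr hmn)).mono ?_)
  rintro _ ⟨n, rfl⟩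
  simp [hperiodic, coeff_zero_eq_eval_zero]

theorem eq_of_toLex_le_of_add_eq {s a a₀ b b₀ : ℤ} {m m₀ n n₀ : ℕ} (hs : s ≠ 0)
    (ha : toLex (s * a, m) ≤ toLex (s * a₀, m₀)) (hb : toLex (s * b, n) ≤ toLex (s * b₀, n₀))
    (hab : a + b = a₀ + b₀) : a = a₀ ∧ b = b₀ ∧ m ≤ m₀ ∧ n ≤ n₀ := by
  rw [Prod.Lex.toLex_le_toLex'] at ha hb
  have hsum : s * a + s * b = s * a₀ + s * b₀ := by rw [← mul_add, ← mul_add, hab]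
  have hsa : s * a = s * a₀ := by linarith [ha.1, hb.1]
  have hsb : s * b = s * b₀ := by linarith [ha.1, hb.1]
  exact ⟨mul_left_cancel₀ hs hsa, mul_left_cancel₀ hs hsb, ha.2 hsa, hb.2 hsb⟩

/-- For `s = 1`, `p₀ = (m₀, k₀)` is the top corner of the support of `c` (largest `k`, then
largest `m`); for `s = -1` it is the bottom corner (smallest `k`, then largest `m`). -/
def IsLeadingIndex {M : Type*} [Zero M] (s : ℤ) (c : ℕ × ℤ →₀ M) (p₀ : ℕ × ℤ) : Prop :=
  p₀ ∈ c.support ∧ ∀ p ∈ c.support, toLex (s * p.2, p.1) ≤ toLex (s * p₀.2, p₀.1)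

theorem exists_isLeadingIndex {M : Type*} [Zero M] (s : ℤ) {c : ℕ × ℤ →₀ M} (hc : c ≠ 0) :
    ∃ p₀, IsLeadingIndex s c p₀ :=
  c.support.exists_max_image (fun p => toLex (s * p.2, p.1)) (Finsupp.support_nonempty_iff.mpr hc)

theorem Module.Basis.repr_mul_apply {ι R A : Type*} [CommSemiring R] [Semiring A] [Algebra R A]
    (b : Module.Basis ι R A) (u v : A) (r : ι) :
    b.repr (u * v) r = ∑ p ∈ (b.repr u).support, ∑ q ∈ (b.repr v).support,
      b.repr u p * b.repr v q * b.repr (b p * b q) r := by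
  conv_lhs => rw [← b.linearCombination_repr u, ← b.linearCombination_repr v]
  simp only [Finsupp.linearCombination_apply, Finsupp.sum, Finset.sum_mul, Finset.mul_sum,
    smul_mul_smul_comm, map_sum, map_smul, Finsupp.finsetSum_apply, Finsupp.smul_apply,
    smul_eq_mul]
  exact Finset.sum_comm

section Semiconj

variable {K A : Type*} [CommRing K] [Ring A] [Algebra K A]

theorem SemiconjBy.aeval_right {a z z' : A} (h : SemiconjBy a z z') (q : K[X]) :
    SemiconjBy a (aeval z q) (aeval z' q) := by
  induction q using Polynomial.induction_on' with
  | add p q hp hq => simpa only [map_add] using hp.add_right hq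
  | monomial n c =>
    simpa only [aeval_monomial] using
      SemiconjBy.mul_right (Algebra.commute_algebraMap_right c a) (h.pow_right n)

theorem SemiconjBy.units_zpow_left_sub_one {y : Aˣ} {H : A}
    (hy : SemiconjBy (y : A) H (H - 1)) (k : ℤ) : SemiconjBy (↑(y ^ k) : A) H (H - k) := by
  have shift {a u v : A} (c : ℤ) (h : SemiconjBy a u v) : SemiconjBy a (u + c) (v + c) :=
    h.add_right (Int.cast_commute c a).symm
  induction k using Int.induction_on with
  | zero => simp
  | succ k ih =>
    have ih' : SemiconjBy (↑(y ^ (k : ℤ)) : A) (H - 1) (H - ↑((k : ℤ) + 1)) := by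
      convert shift (-1) ih using 1 <;> push_cast <;> abel
    rw [zpow_add_one, Units.val_mul]
    exact ih'.mul_left hy
  | pred k ih =>
    have ih' : SemiconjBy (↑(y ^ (-k : ℤ)) : A) (H + 1) (H - ↑(-(k : ℤ) - 1)) := by
      convert shift 1 ih using 1 <;> push_cast <;> abel
    have hy' : SemiconjBy (↑y⁻¹ : A) H (H + 1) := by
      simpa using shift 1 hy.units_inv_symm_left
    rw [zpow_sub_one, Units.val_mul]
    exact ih'.mul_left hy'

theorem SemiconjBy.units_zpow_mul_aeval {y : Aˣ} {H : A} (hy : SemiconjBy (y : A) H (H - 1))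
    (k : ℤ) (q : K[X]) : ↑(y ^ k) * aeval H q = aeval H (taylor (-k : K) q) * ↑(y ^ k) := by
  rw [((hy.units_zpow_left_sub_one k).aeval_right q).eq, taylor_apply, aeval_comp]
  simp [sub_eq_add_neg]

theorem SemiconjBy.aeval_mul_zpow_mul_aeval_mul_zpow {y : Aˣ} {H : A}
    (hy : SemiconjBy (y : A) H (H - 1)) (p q : K[X]) (k l : ℤ) :
    aeval H p * ↑(y ^ k) * (aeval H q * ↑(y ^ l)) =
      aeval H (p * taylor (-k : K) q) * ↑(y ^ (k + l)) := by
  rw [mul_assoc, ← mul_assoc _ (aeval H q), hy.units_zpow_mul_aeval, mul_assoc, ← Units.val_mul,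
    ← zpow_add, ← mul_assoc, map_mul]

end Semiconj

abbrev SquareClasses (K : Type*) [Field K] : Type _ := Kˣ ⧸ (powMonoidHom 2 : Kˣ →* Kˣ).range

structure B1Basis (K B : Type*) [Field K] [Ring B] [Algebra K B] where
  h : B
  x : Bˣ
  x_mul_h : (x : B) * h = (h - 1) * x
  basis : Module.Basis (ℕ × ℤ) K B
  basis_apply : ∀ m k, basis (m, k) = h ^ m * ↑(x ^ k)

namespace B1Basis

variable {K B : Type*} [Field K] [Ring B] [Algebra K B] (S : B1Basis K B)

theorem semiconjBy_x_h : SemiconjBy (S.x : B) S.h (S.h - 1) := S.x_mul_h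

theorem zpow_mul_aeval (k : ℤ) (q : K[X]) :
    ↑(S.x ^ k) * aeval S.h q = aeval S.h (taylor (-k : K) q) * ↑(S.x ^ k) :=
  S.semiconjBy_x_h.units_zpow_mul_aeval k q

theorem basis_eq_aeval_mul_zpow (m : ℕ) (k : ℤ) :
    S.basis (m, k) = aeval S.h (X ^ m : K[X]) * ↑(S.x ^ k) := by
  rw [basis_apply, map_pow, aeval_X]

theorem repr_aeval_mul_zpow (q : K[X]) (j : ℤ) (r : ℕ × ℤ) :
    S.basis.repr (aeval S.h q * ↑(S.x ^ j)) r = if r.2 = j then q.coeff r.1 else 0 := by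
  induction q using Polynomial.induction_on' with
  | add p q hp hq =>
    simp only [map_add, add_mul, Finsupp.add_apply, hp, hq, coeff_add]
    split_ifs <;> simp
  | monomial n c =>
    rw [aeval_monomial, mul_assoc, ← Algebra.smul_def, ← S.basis_apply, map_smul,
      Module.Basis.repr_self, Finsupp.smul_single, smul_eq_mul, mul_one, Finsupp.single_apply,
      coeff_monomial]
    obtain ⟨m, t⟩ := r
    rcases eq_or_ne t j with rfl | ht
    · simp
    · simp [ht, Ne.symm ht]

theorem repr_basis_mul_basis (p q r : ℕ × ℤ) :
    S.basis.repr (S.basis p * S.basis q) r =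
      if r.2 = p.2 + q.2 then (X ^ p.1 * (X + C (-p.2 : K)) ^ q.1).coeff r.1 else 0 := by
  rw [basis_eq_aeval_mul_zpow, basis_eq_aeval_mul_zpow,
    S.semiconjBy_x_h.aeval_mul_zpow_mul_aeval_mul_zpow, repr_aeval_mul_zpow, taylor_X_pow]

theorem repr_basis_mul_basis_of_toLex_le {s : ℤ} (hs : s ≠ 0) {p q p₀ q₀ : ℕ × ℤ}
    (hp : toLex (s * p.2, p.1) ≤ toLex (s * p₀.2, p₀.1))
    (hq : toLex (s * q.2, q.1) ≤ toLex (s * q₀.2, q₀.1)) :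
    S.basis.repr (S.basis p * S.basis q) (p₀ + q₀) = if p = p₀ ∧ q = q₀ then 1 else 0 := by
  rw [repr_basis_mul_basis, Prod.fst_add, Prod.snd_add]
  by_cases hsum : p₀.2 + q₀.2 = p.2 + q.2
  · obtain ⟨h2p, h2q, h1p, h1q⟩ := eq_of_toLex_le_of_add_eq hs hp hq hsum.symm
    rw [if_pos hsum, coeff_X_pow_mul_X_add_C_pow_of_le _ _ _ _ (by omega)]
    simp only [Prod.ext_iff, h2p, h2q, and_true]
    split_ifs <;> first | rfl | (exfalso; omega)
  · rw [if_neg hsum, if_neg]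
    rintro ⟨rfl, rfl⟩
    exact hsum rfl

theorem repr_mul_of_isLeadingIndex {s : ℤ} (hs : s ≠ 0) {u v : B} {p₀ q₀ : ℕ × ℤ}
    (hu : IsLeadingIndex s (S.basis.repr u) p₀) (hv : IsLeadingIndex s (S.basis.repr v) q₀) :
    S.basis.repr (u * v) (p₀ + q₀) = S.basis.repr u p₀ * S.basis.repr v q₀ := by
  rw [S.basis.repr_mul_apply, Finset.sum_congr rfl fun p hp => Finset.sum_congr rfl fun q hq => by
    rw [S.repr_basis_mul_basis_of_toLex_le hs (hu.2 p hp) (hv.2 q hq)]]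
  simp [ite_and, hu.1, hv.1]

theorem basis_zero_zpow (k : ℤ) : S.basis (0, k) = ↑(S.x ^ k) := by
  rw [basis_apply, pow_zero, one_mul]

theorem basis_zero_zero : S.basis (0, 0) = 1 := by
  rw [basis_zero_zpow, zpow_zero, Units.val_one]

theorem repr_one : S.basis.repr 1 = Finsupp.single 0 1 := by
  rw [← S.basis.repr_self, Prod.zero_eq_mk, basis_zero_zero]

include S in
theorem nontrivial : Nontrivial B :=
  nontrivial_of_ne _ _ (S.basis.ne_zero 0)

theorem add_eq_zero_of_isLeadingIndex {s : ℤ} (hs : s ≠ 0) (u : Bˣ) {p₀ q₀ : ℕ × ℤ}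
    (hu : IsLeadingIndex s (S.basis.repr u) p₀) (hv : IsLeadingIndex s (S.basis.repr ↑u⁻¹) q₀) :
    p₀ + q₀ = 0 := by
  have hprod := S.repr_mul_of_isLeadingIndex hs hu hv
  rw [Units.mul_inv, repr_one] at hprod
  by_contra hne
  rw [Finsupp.single_eq_of_ne hne] at hprod
  exact mul_ne_zero (Finsupp.mem_support_iff.mp hu.1) (Finsupp.mem_support_iff.mp hv.1) hprod.symm

/-- Both the top and the bottom corners of `u` and `u⁻¹` add up to the only index `(0, 0)` of
`1 = u * u⁻¹`, which squeezes the support of `u` to a single index `(0, k)`. -/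
theorem exists_support_repr_units_subset (u : Bˣ) :
    ∃ k : ℤ, (S.basis.repr u).support ⊆ {(0, k)} := by
  have := S.nontrivial
  have hne (w : Bˣ) : S.basis.repr w ≠ 0 := by simp
  obtain ⟨p, hp⟩ := exists_isLeadingIndex 1 (hne u)
  obtain ⟨q, hq⟩ := exists_isLeadingIndex 1 (hne u⁻¹)
  obtain ⟨p', hp'⟩ := exists_isLeadingIndex (-1) (hne u)
  obtain ⟨q', hq'⟩ := exists_isLeadingIndex (-1) (hne u⁻¹)
  have htop := S.add_eq_zero_of_isLeadingIndex one_ne_zero u hp hq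
  have hbot := S.add_eq_zero_of_isLeadingIndex (by norm_num) u hp' hq'
  simp only [Prod.ext_iff, Prod.fst_add, Prod.snd_add, Prod.fst_zero, Prod.snd_zero] at htop hbot
  have hpp' := (Prod.Lex.toLex_le_toLex'.mp (hp'.2 p hp.1)).1
  have hqq' := (Prod.Lex.toLex_le_toLex'.mp (hq'.2 q hq.1)).1
  refine ⟨p.2, fun r hr => ?_⟩
  have hr_top := Prod.Lex.toLex_le_toLex'.mp (hp.2 r hr)
  have hr_bot := (Prod.Lex.toLex_le_toLex'.mp (hp'.2 r hr)).1
  simp only [one_mul, neg_one_mul, neg_le_neg_iff] at hr_top hr_bot hpp' hqq'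
  have hr2 : r.2 = p.2 := by omega
  exact Finset.mem_singleton.mpr (Prod.ext (by have := hr_top.2 hr2; omega) hr2)

theorem exists_eq_smul_zpow (u : Bˣ) : ∃ (c : Kˣ) (k : ℤ), (u : B) = (c : K) • ↑(S.x ^ k) := by
  obtain ⟨k, hk⟩ := S.exists_support_repr_units_subset u
  obtain ⟨c, hc⟩ := Finsupp.support_subset_singleton'.mp hk
  have hc0 : c ≠ 0 := by
    rintro rfl
    have := S.nontrivial
    simp at hc
  refine ⟨Units.mk0 c hc0, k, ?_⟩
  rw [← S.basis.repr.symm_apply_apply (u : B), hc, Module.Basis.repr_symm_single,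
    basis_zero_zpow, Units.val_mk0]

theorem smul_zpow_inj {c c' : K} {k k' : ℤ} (hc : c ≠ 0)
    (h : c • (↑(S.x ^ k) : B) = c' • ↑(S.x ^ k')) : c = c' ∧ k = k' := by
  have := congrArg S.basis.repr h
  simp only [← basis_zero_zpow, map_smul, Module.Basis.repr_self, Finsupp.smul_single,
    smul_eq_mul, mul_one] at this
  rcases (Finsupp.single_eq_single_iff _ _ _ _).mp this with ⟨hk, hc'⟩ | ⟨hc0, -⟩
  · exact ⟨hc', (Prod.ext_iff.mp hk).2⟩
  · exact absurd hc0 hc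

/-- The polynomial `q_j` in the decomposition `w = ∑ⱼ q_j(h) x^j`. -/
noncomputable def column (j : ℤ) : B →ₗ[K] K[X] :=
  Finsupp.lsum K (fun m => monomial m) ∘ₗ
    Finsupp.lcomapDomain (·, j) (Prod.mk_left_injective j) ∘ₗ S.basis.repr.toLinearMap

theorem coeff_column (j : ℤ) (w : B) (i : ℕ) : (S.column j w).coeff i = S.basis.repr w (i, j) := by
  simp [column, coeff_monomial, Finsupp.sum, eq_comm]

theorem ext_column {w w' : B} (h : ∀ j, S.column j w = S.column j w') : w = w' :=
  S.basis.repr.injective <| Finsupp.ext fun r => by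
    simpa only [coeff_column] using congrArg (coeff · r.1) (h r.2)

theorem column_aeval_mul_zpow (j k : ℤ) (q : K[X]) :
    S.column j (aeval S.h q * ↑(S.x ^ k)) = if k = j then q else 0 := by
  ext i
  rw [coeff_column, repr_aeval_mul_zpow]
  split_ifs with h1 h2 h2 <;> first | rfl | simp_all

theorem column_zpow_mul (j k : ℤ) (w : B) :
    S.column (k + j) (↑(S.x ^ k) * w) = taylor (-k : K) (S.column j w) := by
  have : S.column (k + j) ∘ₗ LinearMap.mulLeft K (↑(S.x ^ k) : B) =
      taylor (-k : K) ∘ₗ S.column j := by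
    refine S.basis.ext fun ⟨m, l⟩ => ?_
    simp only [LinearMap.comp_apply, LinearMap.mulLeft_apply, basis_eq_aeval_mul_zpow]
    rw [← mul_assoc, zpow_mul_aeval, mul_assoc, ← Units.val_mul, ← zpow_add,
      column_aeval_mul_zpow, column_aeval_mul_zpow]
    split_ifs <;> first | rfl | simp_all
  exact LinearMap.congr_fun this w

theorem column_mul_zpow (j k : ℤ) (w : B) :
    S.column (j + k) (w * ↑(S.x ^ k)) = S.column j w := by
  have : S.column (j + k) ∘ₗ LinearMap.mulRight K (↑(S.x ^ k) : B) = S.column j := by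
    refine S.basis.ext fun ⟨m, l⟩ => ?_
    simp only [LinearMap.comp_apply, LinearMap.mulRight_apply, basis_eq_aeval_mul_zpow]
    rw [mul_assoc, ← Units.val_mul, ← zpow_add, column_aeval_mul_zpow, column_aeval_mul_zpow]
    simp
  exact LinearMap.congr_fun this w

noncomputable def laurent : (ℤ →₀ K) →ₗ[K] B :=
  Finsupp.linearCombination K fun j => (↑(S.x ^ j) : B)

theorem laurent_single (j : ℤ) (a : K) : S.laurent (Finsupp.single j a) = a • ↑(S.x ^ j) :=
  Finsupp.linearCombination_single K a j

theorem column_laurent (j : ℤ) (p : ℤ →₀ K) : S.column j (S.laurent p) = C (p j) := by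
  induction p using Finsupp.induction_linear with
  | zero => simp
  | add p q hp hq => simp [hp, hq]
  | single k a =>
    have : S.laurent (Finsupp.single k a) = a • (aeval S.h (1 : K[X]) * ↑(S.x ^ k)) := by
      rw [laurent_single, map_one, one_mul]
    rw [this, map_smul, column_aeval_mul_zpow, Finsupp.single_apply]
    split_ifs <;> simp [smul_eq_C_mul]

theorem exists_eq_laurent_of_commute [CharZero K] {w : B} (hw : Commute (S.x : B) w) :
    ∃ p, w = S.laurent p := by
  have hcol (j : ℤ) : S.column j w = C ((S.column j w).coeff 0) := by
    refine eq_C_of_taylor_eq_self (neg_ne_zero.mpr one_ne_zero) ?_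
    have := S.column_zpow_mul j 1 w
    rw [zpow_one, hw.eq, ← zpow_one S.x, add_comm, column_mul_zpow] at this
    exact_mod_cast this.symm
  refine ⟨Finsupp.lcomapDomain (R := K) (0, ·) (Prod.mk_right_injective 0) (S.basis.repr w),
    S.ext_column fun j => ?_⟩
  rw [column_laurent, hcol j, coeff_column]
  simp

section Lift

variable {A : Type*} [Ring A] [Algebra K A]

noncomputable def liftLinear (H : A) (y : Aˣ) : B →ₗ[K] A :=
  S.basis.constr K fun p => H ^ p.1 * ↑(y ^ p.2)

theorem liftLinear_aeval_mul_zpow (H : A) (y : Aˣ) (q : K[X]) (k : ℤ) :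
    S.liftLinear H y (aeval S.h q * ↑(S.x ^ k)) = aeval H q * ↑(y ^ k) := by
  induction q using Polynomial.induction_on' with
  | add p q hp hq => simp only [map_add, add_mul, hp, hq]
  | monomial n c =>
    rw [aeval_monomial, aeval_monomial, mul_assoc, mul_assoc, ← Algebra.smul_def,
      ← Algebra.smul_def, ← S.basis_apply, map_smul, liftLinear, Module.Basis.constr_basis]

theorem liftLinear_basis (H : A) (y : Aˣ) (m : ℕ) (k : ℤ) :
    S.liftLinear H y (S.basis (m, k)) = H ^ m * ↑(y ^ k) :=
  S.basis.constr_basis K _ _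

noncomputable def lift (H : A) (y : Aˣ) (hy : SemiconjBy (y : A) H (H - 1)) : B →ₐ[K] A :=
  AlgHom.ofLinearMap (S.liftLinear H y)
    (by rw [← S.basis_zero_zero, liftLinear_basis, pow_zero, one_mul, zpow_zero, Units.val_one])
    ((LinearMap.map_mul_iff _).2 <| S.basis.ext fun ⟨m, k⟩ => S.basis.ext fun ⟨n, l⟩ => by
      simp only [LinearMap.compr₂_apply, LinearMap.compl₂_apply, LinearMap.comp_apply,
        LinearMap.mul_apply', basis_eq_aeval_mul_zpow]
      rw [S.semiconjBy_x_h.aeval_mul_zpow_mul_aeval_mul_zpow, liftLinear_aeval_mul_zpow,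
        liftLinear_aeval_mul_zpow, liftLinear_aeval_mul_zpow,
        hy.aeval_mul_zpow_mul_aeval_mul_zpow])

variable {H : A} {y : Aˣ} (hy : SemiconjBy (y : A) H (H - 1))

theorem lift_h : S.lift H y hy S.h = H := by
  simpa [lift, basis_apply] using S.liftLinear_basis H y 1 0

theorem lift_x : S.lift H y hy S.x = y := by
  simpa [lift, basis_apply] using S.liftLinear_basis H y 0 1

theorem algHom_ext {f g : B →ₐ[K] A} (hh : f S.h = g S.h) (hx : f S.x = g S.x) : f = g := by
  have hunits : Units.map (f : B →* A) S.x = Units.map (g : B →* A) S.x := Units.ext hx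
  have hzpow (k : ℤ) : f ↑(S.x ^ k) = g ↑(S.x ^ k) := by
    simpa only [← map_zpow, Units.coe_map, MonoidHom.coe_coe] using
      congrArg (fun u => ((u ^ k : Aˣ) : A)) hunits
  refine AlgHom.toLinearMap_injective (S.basis.ext fun ⟨m, k⟩ => ?_)
  simp [basis_apply, hh, hzpow]

theorem map_zpow_of_map_x {F : Type*} [FunLike F B A] [AlgHomClass F K B A] (f : F) {c : Kˣ}
    (hf : f S.x = (c : K) • (y : A)) (k : ℤ) :
    f ↑(S.x ^ k) = ((c ^ k : Kˣ) : K) • ↑(y ^ k) := by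
  have hunits : Units.map (f : B →* A) S.x = Units.map (algebraMap K A : K →* A) c * y :=
    Units.ext (by simp [hf, Algebra.smul_def])
  have hcomm : Commute (Units.map (algebraMap K A : K →* A) c) y :=
    Units.ext (Algebra.commutes _ _)
  change ((Units.map (f : B →* A) (S.x ^ k) : Aˣ) : A) = _
  rw [map_zpow, hunits, hcomm.mul_zpow, Units.val_mul, ← map_zpow, Units.coe_map,
    Algebra.smul_def]
  rfl

end Lift

theorem algEquiv_ext {σ τ : B ≃ₐ[K] B} (hh : σ S.h = τ S.h) (hx : σ S.x = τ S.x) : σ = τ :=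
  AlgEquiv.coe_toAlgHom_injective (S.algHom_ext hh hx)

theorem commute_x_laurent (p : ℤ →₀ K) : Commute (S.x : B) (S.laurent p) := by
  induction p using Finsupp.induction_linear with
  | zero => simp
  | add p q hp hq => simpa using hp.add_right hq
  | single j a =>
    simpa [laurent_single] using ((Commute.refl S.x).zpow_right j).units_val.smul_right a

theorem map_laurent_of_map_x {F : Type*} [FunLike F B B] [AlgHomClass F K B B] {f : F}
    (hf : f S.x = S.x) (p : ℤ →₀ K) :
    f (S.laurent p) = S.laurent p := by
  induction p using Finsupp.induction_linear with
  | zero => simp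
  | add p q hp hq => simp [hp, hq]
  | single j a => simp [laurent_single, S.map_zpow_of_map_x f (c := 1) (by simpa using hf)]

-- `torusAut c`, `shiftAut p` and `zetaAut` are the automorphisms `t_c`, `s_p` and `ζ`.
noncomputable def torusHom (c : Kˣ) : B →ₐ[K] B :=
  S.lift S.h (Units.map (algebraMap K B : K →* B) c * S.x)
    (SemiconjBy.mul_left (Algebra.commute_algebraMap_left (c : K) (S.h - 1)) S.semiconjBy_x_h)

theorem torusHom_h (c : Kˣ) : S.torusHom c S.h = S.h := S.lift_h _

theorem torusHom_x (c : Kˣ) : S.torusHom c S.x = (c : K) • (S.x : B) := by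
  rw [torusHom, lift_x, Units.val_mul, Units.coe_map, Algebra.smul_def]
  rfl

theorem torusHom_comp (c d : Kˣ) : (S.torusHom c).comp (S.torusHom d) = S.torusHom (c * d) :=
  S.algHom_ext (by simp [torusHom_h]) (by simp [torusHom_x, smul_smul, mul_comm])

theorem torusHom_one : S.torusHom 1 = AlgHom.id K B :=
  S.algHom_ext (by simp [torusHom_h]) (by simp [torusHom_x])

noncomputable def shiftHom (p : ℤ →₀ K) : B →ₐ[K] B :=
  S.lift (S.h + S.laurent p) S.x
    (by simpa [sub_add_eq_add_sub] using S.semiconjBy_x_h.add_right (S.commute_x_laurent p))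

theorem shiftHom_h (p : ℤ →₀ K) : S.shiftHom p S.h = S.h + S.laurent p := S.lift_h _

theorem shiftHom_x (p : ℤ →₀ K) : S.shiftHom p S.x = S.x := S.lift_x _

theorem shiftHom_comp (p q : ℤ →₀ K) :
    (S.shiftHom p).comp (S.shiftHom q) = S.shiftHom (p + q) :=
  S.algHom_ext
    (by simp [shiftHom_h, S.map_laurent_of_map_x (S.shiftHom_x p), add_assoc])
    (by simp [shiftHom_x])

theorem shiftHom_zero : S.shiftHom 0 = AlgHom.id K B :=
  S.algHom_ext (by simp [shiftHom_h]) (by simp [shiftHom_x])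

noncomputable def zetaHom : B →ₐ[K] B :=
  S.lift (-S.h) S.x⁻¹ (by simpa [sub_eq_add_neg, add_comm] using
    (S.semiconjBy_x_h.units_zpow_left_sub_one (-1)).neg_right)

theorem zetaHom_h : S.zetaHom S.h = -S.h := S.lift_h _

theorem zetaHom_x : S.zetaHom S.x = ↑S.x⁻¹ := S.lift_x _

theorem zetaHom_zpow (k : ℤ) : S.zetaHom ↑(S.x ^ k) = ↑(S.x ^ (-k)) := by
  simpa using S.map_zpow_of_map_x S.zetaHom (c := 1) (y := S.x⁻¹) (by simp [zetaHom_x]) k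

theorem zetaHom_comp_self : S.zetaHom.comp S.zetaHom = AlgHom.id K B :=
  S.algHom_ext (by simp [zetaHom_h]) (by simpa [zetaHom_x] using S.zetaHom_zpow (-1))

noncomputable def torusAut (c : Kˣ) : B ≃ₐ[K] B :=
  AlgEquiv.ofAlgHom (S.torusHom c) (S.torusHom c⁻¹)
    (by rw [torusHom_comp, mul_inv_cancel, torusHom_one])
    (by rw [torusHom_comp, inv_mul_cancel, torusHom_one])

noncomputable def shiftAut (p : ℤ →₀ K) : B ≃ₐ[K] B :=
  AlgEquiv.ofAlgHom (S.shiftHom p) (S.shiftHom (-p))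
    (by rw [shiftHom_comp, add_neg_cancel, shiftHom_zero])
    (by rw [shiftHom_comp, neg_add_cancel, shiftHom_zero])

noncomputable def zetaAut : B ≃ₐ[K] B :=
  AlgEquiv.ofAlgHom S.zetaHom S.zetaHom S.zetaHom_comp_self S.zetaHom_comp_self

@[simp] theorem torusAut_h (c : Kˣ) : S.torusAut c S.h = S.h := S.torusHom_h c

@[simp] theorem torusAut_x (c : Kˣ) : S.torusAut c S.x = (c : K) • (S.x : B) := S.torusHom_x c

@[simp] theorem torusAut_zpow (c : Kˣ) (k : ℤ) :
    S.torusAut c ↑(S.x ^ k) = ((c ^ k : Kˣ) : K) • ↑(S.x ^ k) :=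
  S.map_zpow_of_map_x (S.torusAut c) (S.torusAut_x c) k

@[simp] theorem torusAut_x_inv (c : Kˣ) : S.torusAut c ↑S.x⁻¹ = (c : K)⁻¹ • ↑S.x⁻¹ := by
  simpa using S.torusAut_zpow c (-1)

@[simp] theorem shiftAut_h (p : ℤ →₀ K) : S.shiftAut p S.h = S.h + S.laurent p := S.shiftHom_h p

@[simp] theorem shiftAut_x (p : ℤ →₀ K) : S.shiftAut p S.x = S.x := S.shiftHom_x p

@[simp] theorem shiftAut_laurent (p q : ℤ →₀ K) : S.shiftAut p (S.laurent q) = S.laurent q :=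
  S.map_laurent_of_map_x (S.shiftAut_x p) q

@[simp] theorem shiftAut_zpow (p : ℤ →₀ K) (k : ℤ) : S.shiftAut p ↑(S.x ^ k) = ↑(S.x ^ k) := by
  simpa using S.map_zpow_of_map_x (S.shiftAut p) (c := 1) (by simp) k

@[simp] theorem zetaAut_h : S.zetaAut S.h = -S.h := S.zetaHom_h

@[simp] theorem zetaAut_zpow (k : ℤ) : S.zetaAut ↑(S.x ^ k) = ↑(S.x ^ (-k)) := S.zetaHom_zpow k

@[simp] theorem zetaAut_x : S.zetaAut S.x = ↑S.x⁻¹ := S.zetaHom_x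

theorem shiftAut_add (p q : ℤ →₀ K) : S.shiftAut (p + q) = S.shiftAut p * S.shiftAut q :=
  S.algEquiv_ext (by simp [add_assoc]) (by simp)

theorem commutator_torusAut_zetaAut (c : Kˣ) :
    ⁅S.torusAut c, S.zetaAut⁆ = S.torusAut (c ^ 2) := by
  refine commutatorElement_eq_of_mul_eq (S.algEquiv_ext (by simp) ?_)
  simp only [AlgEquiv.mul_apply, zetaAut_x, torusAut_x, torusAut_x_inv, map_smul, smul_smul,
    Units.val_pow_eq_pow_val]
  congr 1
  field_simp

theorem commutator_torusAut_shiftAut_single (c : Kˣ) (j : ℤ) (a : K) :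
    ⁅S.torusAut c, S.shiftAut (Finsupp.single j a)⁆ =
      S.shiftAut (Finsupp.single j ((((c ^ j : Kˣ) : K) - 1) * a)) := by
  refine commutatorElement_eq_of_mul_eq (S.algEquiv_ext ?_ (by simp))
  simp only [AlgEquiv.mul_apply, shiftAut_h, torusAut_h, map_add, laurent_single, map_smul,
    torusAut_zpow, shiftAut_zpow]
  module

theorem commutator_zetaAut_shiftAut_single_zero (a : K) :
    ⁅S.zetaAut, S.shiftAut (Finsupp.single 0 a)⁆ = S.shiftAut (Finsupp.single 0 (-2 * a)) := by
  refine commutatorElement_eq_of_mul_eq (S.algEquiv_ext ?_ ?_)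
  · simp only [AlgEquiv.mul_apply, shiftAut_h, zetaAut_h, map_add, map_neg, laurent_single,
      map_smul, zetaAut_zpow, shiftAut_zpow, neg_zero]
    module
  · simp only [AlgEquiv.mul_apply, shiftAut_x, zetaAut_x]
    rw [← zpow_neg_one, shiftAut_zpow, shiftAut_zpow]

@[simp] theorem shiftAut_zero : S.shiftAut 0 = 1 :=
  S.algEquiv_ext (by simp) (by simp)

theorem torusAut_sq_mem_commutator (c : Kˣ) : S.torusAut (c ^ 2) ∈ commutator (B ≃ₐ[K] B) :=
  S.commutator_torusAut_zetaAut c ▸ commutatorElement_mem_commutator _ _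

theorem shiftAut_single_mem_commutator [CharZero K] (j : ℤ) (a : K) :
    S.shiftAut (Finsupp.single j a) ∈ commutator (B ≃ₐ[K] B) := by
  rcases eq_or_ne j 0 with rfl | hj
  · have h := S.commutator_zetaAut_shiftAut_single_zero (-(a / 2))
    rw [show -2 * -(a / 2) = a by ring] at h
    exact h ▸ commutatorElement_mem_commutator _ _
  · have h := S.commutator_torusAut_shiftAut_single (Units.mk0 2 two_ne_zero) j
      (a / ((2 : K) ^ j - 1))
    rw [Units.val_zpow_eq_zpow_val, Units.val_mk0,
      mul_div_cancel₀ _ (sub_ne_zero.mpr (two_zpow_ne_one hj))] at h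
    exact h ▸ commutatorElement_mem_commutator _ _

theorem shiftAut_mem_commutator [CharZero K] (p : ℤ →₀ K) :
    S.shiftAut p ∈ commutator (B ≃ₐ[K] B) := by
  induction p using Finsupp.induction_linear with
  | zero => simp [one_mem]
  | add p q hp hq => simpa [shiftAut_add] using mul_mem hp hq
  | single j a => exact S.shiftAut_single_mem_commutator j a

theorem exists_map_h_of_map_x [CharZero K] {F : Type*} [FunLike F B B] [AlgHomClass F K B B]
    {f : F} {c : K} (hc : c ≠ 0) (hf : f S.x = c • (S.x : B)) :
    ∃ p, f S.h = S.h + S.laurent p := by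
  have hrel : (S.x : B) * f S.h = (f S.h - 1) * S.x := by
    have := congrArg f S.x_mul_h
    rw [map_mul, map_mul, map_sub, map_one, hf, smul_mul_assoc, mul_smul_comm] at this
    exact smul_right_injective B hc this
  obtain ⟨p, hp⟩ := S.exists_eq_laurent_of_commute (w := f S.h - S.h) <| by
    simp only [Commute, SemiconjBy, mul_sub, sub_mul, hrel, S.x_mul_h]
    abel
  exact ⟨p, by rw [← hp]; abel⟩

theorem exists_map_x (σ : B ≃ₐ[K] B) :
    ∃ (c : Kˣ) (e : ℤˣ), σ S.x = (c : K) • ↑(S.x ^ (e : ℤ)) := by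
  obtain ⟨c, k, hc⟩ := S.exists_eq_smul_zpow (Units.map (σ : B →* B) S.x)
  obtain ⟨d, l, hd⟩ := S.exists_eq_smul_zpow (Units.map (σ.symm : B →* B) S.x)
  rw [Units.coe_map] at hc hd
  have hσ := S.map_zpow_of_map_x σ hc l
  have hx : (1 : K) • (↑(S.x ^ (1 : ℤ)) : B) =
      ((d : K) * ((c ^ l : Kˣ) : K)) • ↑(S.x ^ (k * l)) := by
    rw [one_smul, zpow_one, mul_smul, zpow_mul, ← hσ, ← map_smul, ← hd]
    simp
  obtain ⟨-, hkl⟩ := S.smul_zpow_inj one_ne_zero hx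
  exact ⟨c, Units.mkOfMulEqOne k l hkl.symm, hc⟩

noncomputable def scale (σ : B ≃ₐ[K] B) : Kˣ := (S.exists_map_x σ).choose

noncomputable def sign (σ : B ≃ₐ[K] B) : ℤˣ := (S.exists_map_x σ).choose_spec.choose

theorem map_x_eq (σ : B ≃ₐ[K] B) :
    σ S.x = (S.scale σ : K) • ↑(S.x ^ (S.sign σ : ℤ)) :=
  (S.exists_map_x σ).choose_spec.choose_spec

theorem scale_eq_and_sign_eq {σ : B ≃ₐ[K] B} {c : Kˣ} {e : ℤˣ}
    (h : σ S.x = (c : K) • ↑(S.x ^ (e : ℤ))) : S.scale σ = c ∧ S.sign σ = e := by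
  obtain ⟨hc, he⟩ := S.smul_zpow_inj (S.scale σ).ne_zero ((S.map_x_eq σ).symm.trans h)
  exact ⟨Units.ext hc, Units.ext he⟩

noncomputable def abelianizationHom : (B ≃ₐ[K] B) →* ℤˣ × SquareClasses K where
  toFun σ := (S.sign σ, (S.scale σ : SquareClasses K))
  map_one' := by
    obtain ⟨hc, he⟩ := S.scale_eq_and_sign_eq (σ := 1) (c := 1) (e := 1) (by simp)
    simp [hc, he]
  map_mul' σ τ := by
    have h : (σ * τ) S.x = ((S.scale τ * S.scale σ ^ (S.sign τ : ℤ) : Kˣ) : K) •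
        ↑(S.x ^ ((S.sign σ * S.sign τ : ℤˣ) : ℤ)) := by
      rw [AlgEquiv.mul_apply, S.map_x_eq τ, map_smul, S.map_zpow_of_map_x σ (S.map_x_eq σ),
        ← zpow_mul, smul_smul]
      simp
    obtain ⟨hc, he⟩ := S.scale_eq_and_sign_eq h
    simp only [hc, he, Prod.mk_mul_mk, QuotientGroup.mk_mul,
      QuotientGroup.mk_zpow_intUnits_eq_of_squares]
    exact Prod.ext rfl (mul_comm (S.scale τ : SquareClasses K) _)

theorem abelianizationHom_apply (σ : B ≃ₐ[K] B) :
    S.abelianizationHom σ = (S.sign σ, (S.scale σ : SquareClasses K)) := rfl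

theorem mem_ker_abelianizationHom {σ : B ≃ₐ[K] B} :
    σ ∈ S.abelianizationHom.ker ↔ ∃ c : Kˣ, σ S.x = ((c : K) ^ 2) • (S.x : B) := by
  rw [MonoidHom.mem_ker, abelianizationHom_apply, Prod.mk_eq_one, QuotientGroup.eq_one_iff]
  constructor
  · rintro ⟨hsign, c, hc⟩
    refine ⟨c, ?_⟩
    rw [S.map_x_eq σ, hsign, ← hc]
    simp
  · rintro ⟨c, hc⟩
    obtain ⟨hscale, hsign⟩ := S.scale_eq_and_sign_eq (c := c ^ 2) (e := 1) (by simpa using hc)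
    exact ⟨hsign, c, by simp [hscale]⟩

theorem commutator_eq_ker [CharZero K] : commutator (B ≃ₐ[K] B) = S.abelianizationHom.ker := by
  refine le_antisymm (Abelianization.commutator_subset_ker (A := ℤˣ × SquareClasses K) _)
    fun σ hσ => ?_
  obtain ⟨c, hc⟩ := S.mem_ker_abelianizationHom.mp hσ
  obtain ⟨p, hp⟩ := S.exists_map_h_of_map_x (pow_ne_zero 2 c.ne_zero) hc
  have hσ : σ = S.shiftAut p * S.torusAut (c ^ 2) :=
    S.algEquiv_ext (by simp [hp]) (by simp [hc])
  exact hσ ▸ mul_mem (S.shiftAut_mem_commutator p) (S.torusAut_sq_mem_commutator c)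

theorem abelianizationHom_torusAut (c : Kˣ) :
    S.abelianizationHom (S.torusAut c) = (1, (c : SquareClasses K)) := by
  obtain ⟨hc, he⟩ := S.scale_eq_and_sign_eq (σ := S.torusAut c) (c := c) (e := 1) (by simp)
  rw [abelianizationHom_apply, hc, he]

theorem abelianizationHom_zetaAut : S.abelianizationHom S.zetaAut = (-1, 1) := by
  obtain ⟨hc, he⟩ := S.scale_eq_and_sign_eq (σ := S.zetaAut) (c := 1) (e := -1) (by simp)
  rw [abelianizationHom_apply, hc, he, QuotientGroup.mk_one]

theorem abelianizationHom_surjective : Function.Surjective S.abelianizationHom := by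
  rintro ⟨e, q⟩
  obtain ⟨c, rfl⟩ := QuotientGroup.mk_surjective q
  rcases Int.units_eq_one_or e with rfl | rfl
  · exact ⟨S.torusAut c, S.abelianizationHom_torusAut c⟩
  · refine ⟨S.zetaAut * S.torusAut c, ?_⟩
    rw [map_mul, abelianizationHom_zetaAut, abelianizationHom_torusAut]
    exact Prod.ext (mul_one _) (one_mul (c : SquareClasses K))

theorem mem_commutator_iff [CharZero K] (σ : B ≃ₐ[K] B) :
    σ ∈ commutator (B ≃ₐ[K] B) ↔
      ∃ (c : Kˣ) (p : ℤ →₀ K), σ S.x = ((c : K) ^ 2) • (S.x : B) ∧ σ S.h = S.h + S.laurent p := by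
  rw [S.commutator_eq_ker, mem_ker_abelianizationHom]
  constructor
  · rintro ⟨c, hc⟩
    obtain ⟨p, hp⟩ := S.exists_map_h_of_map_x (pow_ne_zero 2 c.ne_zero) hc
    exact ⟨c, p, hc, hp⟩
  · rintro ⟨c, -, hc, -⟩
    exact ⟨c, hc⟩

noncomputable def quotientCommutatorEquiv [CharZero K] :
    (B ≃ₐ[K] B) ⧸ commutator (B ≃ₐ[K] B) ≃* ℤˣ × SquareClasses K := by
  -- Elaborated against the expected type, this times out unifying the instances on the product.
  have e := QuotientGroup.quotientKerEquivOfSurjective (G := B ≃ₐ[K] B)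
    (H := ℤˣ × SquareClasses K) S.abelianizationHom S.abelianizationHom_surjective
  exact (QuotientGroup.quotientMulEquivOfEq S.commutator_eq_ker).trans e

end B1Basis

noncomputable def intUnitsMulEquivZModTwo : ℤˣ ≃* Multiplicative (ZMod 2) :=
  mulEquivOfPrimeCardEq (p := 2) (by simp [Nat.card_eq_fintype_card, Fintype.card_units_int])
    (by simp [Nat.card_eq_fintype_card])

/-- The commutator subgroup of `G = Aut_{K-alg}(B₁)` is `{t_{λ²}} ⋉ Sh₁`, i.e. it consists of
the automorphisms `x ↦ λ² x`, `H ↦ H + p(x)`; and `G/[G,G] ≅ ℤ/2 × K^*/(K^*)²`. -/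
theorem commutator_aut_B1 (K B : Type*) [Field K] [CharZero K] [Ring B] [Algebra K B]
    (h : B) (x : Bˣ) (hrel : (x : B) * h = (h - 1) * (x : B))
    (b : Module.Basis (ℕ × ℤ) K B) (hb : ∀ m : ℕ, ∀ k : ℤ, b (m, k) = h ^ m * ((x ^ k : Bˣ) : B)) :
    (∀ σ : B ≃ₐ[K] B, σ ∈ commutator (B ≃ₐ[K] B) ↔
      ∃ (lam : Kˣ) (p : ℤ →₀ K),
        σ (x : B) = algebraMap K B ((lam : K) ^ 2) * (x : B) ∧
        σ h = h + p.sum fun i a => a • ((x ^ i : Bˣ) : B)) ∧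
    Nonempty ((B ≃ₐ[K] B) ⧸ commutator (B ≃ₐ[K] B) ≃*
      Multiplicative (ZMod 2) × (Kˣ ⧸ (powMonoidHom 2 : Kˣ →* Kˣ).range)) := by
  let S : B1Basis K B := ⟨h, x, hrel, b, hb⟩
  refine ⟨fun σ => ?_, ⟨S.quotientCommutatorEquiv.trans
    (intUnitsMulEquivZModTwo.prodCongr (MulEquiv.refl _))⟩⟩
  simp only [S.mem_commutator_iff σ, B1Basis.laurent, Finsupp.linearCombination_apply,
    Algebra.smul_def]
  rfl
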